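/- arXiv:2402.16232 — 8 statements merged into one kernel-verified Lean document; each statement's English description precedes it below -/
import Mathlib

section
/- Suppose affine polynomials γ_x, γ_y on ℝⁿ satisfy γ_x ∼_M γ_y, i.e. γ_x(x) - γ_y(x) ≥ (1/(2M))‖∇γ_x - ∇γ_y‖² and γ_y(y) - γ_x(y) ≥ (1/(2M))‖∇γ_x - ∇γ_y‖². Then γ_y(y) - γ_x(y) ≤ M‖y - x‖² and γ_x(x) - γ_y(x) ≤ M‖y - x‖². -/
/-!
Write `A = γ_y(y) - γ_x(y)` and `B = γ_x(x) - γ_y(x)`, `d = ‖∇γ_x - ∇γ_y‖`, `r = ‖y - x‖`.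
Since the jets are affine, `A + B = ⟪∇γ_x - ∇γ_y, x - y⟫ ≤ d r` by Cauchy–Schwarz.
Each of `A`, `B` is at least `d² / (2M)`, and `d r ≤ d² / (2M) + M r² / 2` by AM–GM,
so each is at most `M r² / 2`.
-/

open scoped RealInnerProductSpace

theorem affine_diff_add_affine_diff {E : Type*} [NormedAddCommGroup E] [InnerProductSpace ℝ E]
    (a b : ℝ) (u v x y : E) :
    ((b + ⟪v, y⟫) - (a + ⟪u, y⟫)) + ((a + ⟪u, x⟫) - (b + ⟪v, x⟫)) = ⟪u - v, x - y⟫ := by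
  simp only [inner_sub_left, inner_sub_right]
  ring

theorem mul_le_sq_div_add_sq_div {M : ℝ} (hM : 0 < M) (d r : ℝ) :
    d * r ≤ 1 / (2 * M) * d ^ 2 + M * r ^ 2 / 2 := by
  have hexpand : 1 / (2 * M) * d ^ 2 + M * r ^ 2 / 2 - d * r = 1 / (2 * M) * (d - M * r) ^ 2 := by
    field_simp
    ring
  have hnonneg : 0 ≤ 1 / (2 * M) * (d - M * r) ^ 2 := by positivity
  linarith

theorem le_half_mul_sq_of_add_le_mul {M d r s t : ℝ} (hM : 0 < M)
    (ht : 1 / (2 * M) * d ^ 2 ≤ t) (hst : s + t ≤ d * r) : s ≤ M * r ^ 2 / 2 := by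
  linarith [mul_le_sq_div_add_sq_div hM d r]

/-- If `γ_x ∼_M γ_y` then the two jet differences are bounded above by `M‖y - x‖²`. -/
theorem jet_diff_upper_bound {n : ℕ} (M : ℝ) (hM : 0 < M)
    (x y : EuclideanSpace ℝ (Fin n)) (ax ay : ℝ)
    (vx vy : EuclideanSpace ℝ (Fin n))
    (h1 : (ax + ⟪vx, x⟫) - (ay + ⟪vy, x⟫) ≥ (1 / (2 * M)) * ‖vx - vy‖ ^ 2)
    (h2 : (ay + ⟪vy, y⟫) - (ax + ⟪vx, y⟫) ≥ (1 / (2 * M)) * ‖vx - vy‖ ^ 2) :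
    (ay + ⟪vy, y⟫) - (ax + ⟪vx, y⟫) ≤ M * ‖y - x‖ ^ 2 ∧
    (ax + ⟪vx, x⟫) - (ay + ⟪vy, x⟫) ≤ M * ‖y - x‖ ^ 2 := by
  have hsum : ((ay + ⟪vy, y⟫) - (ax + ⟪vx, y⟫)) + ((ax + ⟪vx, x⟫) - (ay + ⟪vy, x⟫))
      ≤ ‖vx - vy‖ * ‖y - x‖ := by
    rw [affine_diff_add_affine_diff, norm_sub_rev y x]
    exact real_inner_le_norm _ _
  have hhalf : M * ‖y - x‖ ^ 2 / 2 ≤ M * ‖y - x‖ ^ 2 := by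
    have : 0 ≤ M * ‖y - x‖ ^ 2 := by positivity
    linarith
  constructor
  · linarith [le_half_mul_sq_of_add_le_mul hM h1 hsum]
  · linarith [le_half_mul_sq_of_add_le_mul hM h2 ((add_comm _ _).trans_le hsum)]
end

section
/- Let x < y < z be real numbers and let γ_x, γ_y, γ_z be affine functions on ℝ. If γ_x ∼_M γ_y and γ_y ∼_M γ_z, then γ_x ∼_M γ_z. -/
/-!
Adding the two inequalities of `γ_a ∼_M γ_b` gives `(γ_b' - γ_a')(b - a) ≥ |γ_a' - γ_b'|² / M`, so for
`a < b` the slopes increase, by at most `M (b - a)`. The excess of `γ_x` over `γ_z` at `x` is the sum of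
the excesses of `γ_x` over `γ_y` and of `γ_y` over `γ_z`, plus `(γ_z' - γ_y')(y - x)`; this last term
dominates the cross term `(γ_y' - γ_x')(γ_z' - γ_y') / M` of `|γ_x' - γ_z'|² / (2M)`. The excess at `z`
is symmetric.
-/

section OrderedField

variable {𝕜 : Type*} [Field 𝕜] [LinearOrder 𝕜] [IsStrictOrderedRing 𝕜]

theorem nonneg_and_le_mul_of_sq_div_le_mul {M h d : 𝕜} (hM : 0 < M) (hh : 0 < h)
    (hd : d ^ 2 / M ≤ d * h) : 0 ≤ d ∧ d ≤ M * h := by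
  rw [div_le_iff₀ hM] at hd
  constructor <;> nlinarith [sq_nonneg d, mul_pos hM hh]

theorem sq_add_le_of_le_mul {M d e h : 𝕜} (hM : 0 < M) (he : 0 ≤ e) (hd : d ≤ M * h) :
    1 / (2 * M) * (d + e) ^ 2 ≤ 1 / (2 * M) * d ^ 2 + 1 / (2 * M) * e ^ 2 + e * h := by
  have cross : d * e / M ≤ e * h := by
    rw [div_le_iff₀ hM]; nlinarith
  calc 1 / (2 * M) * (d + e) ^ 2 = 1 / (2 * M) * d ^ 2 + 1 / (2 * M) * e ^ 2 + d * e / M := by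
        field_simp; ring
    _ ≤ _ := by linarith

end OrderedField

/-- An affine function `t ↦ value + slope * (t - base)` on a line, remembered with its base point. -/
structure BasedAffine (𝕜 : Type*) where
  base : 𝕜
  value : 𝕜
  slope : 𝕜

namespace BasedAffine

section CommRing

variable {𝕜 : Type*} [CommRing 𝕜]

def eval (γ : BasedAffine 𝕜) (t : 𝕜) : 𝕜 := γ.value + γ.slope * (t - γ.base)

/-- How far `γ` lies above `δ` at the base point of `γ`. -/
def excess (γ δ : BasedAffine 𝕜) : 𝕜 := γ.value - δ.eval γ.base

theorem excess_add_excess (γ δ : BasedAffine 𝕜) :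
    γ.excess δ + δ.excess γ = (δ.slope - γ.slope) * (δ.base - γ.base) := by
  simp only [excess, eval]; ring

theorem excess_trans (γ δ ζ : BasedAffine 𝕜) :
    γ.excess ζ = γ.excess δ + δ.excess ζ + (ζ.slope - δ.slope) * (δ.base - γ.base) := by
  simp only [excess, eval]; ring

end CommRing

variable {𝕜 : Type*} [Field 𝕜] [LinearOrder 𝕜] [IsStrictOrderedRing 𝕜]

/-- The relation `γ ∼_M δ`. -/
def Related (M : 𝕜) (γ δ : BasedAffine 𝕜) : Prop :=
  1 / (2 * M) * (γ.slope - δ.slope) ^ 2 ≤ γ.excess δ ∧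
    1 / (2 * M) * (γ.slope - δ.slope) ^ 2 ≤ δ.excess γ

variable {M : 𝕜} {γ δ ζ : BasedAffine 𝕜}

theorem Related.slope_sub_nonneg_and_le (hM : 0 < M) (hγδ : Related M γ δ)
    (hbase : γ.base < δ.base) :
    0 ≤ δ.slope - γ.slope ∧ δ.slope - γ.slope ≤ M * (δ.base - γ.base) := by
  apply nonneg_and_le_mul_of_sq_div_le_mul hM (sub_pos.mpr hbase)
  have key : (δ.slope - γ.slope) ^ 2 / M = 2 * (1 / (2 * M) * (γ.slope - δ.slope) ^ 2) := by
    field_simp; ring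
  rw [key, ← excess_add_excess]
  linarith [hγδ.1, hγδ.2]

theorem Related.trans (hM : 0 < M) (hγδ : Related M γ δ) (hδζ : Related M δ ζ)
    (h₁ : γ.base < δ.base) (h₂ : δ.base < ζ.base) : Related M γ ζ := by
  obtain ⟨hs₁, hS₁⟩ := hγδ.slope_sub_nonneg_and_le hM h₁
  obtain ⟨hs₂, hS₂⟩ := hδζ.slope_sub_nonneg_and_le hM h₂
  constructor
  · have := sq_add_le_of_le_mul hM hs₂ hS₁
    rw [excess_trans γ δ ζ]
    linarith [hγδ.1, hδζ.1]
  · have := sq_add_le_of_le_mul hM hs₁ hS₂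
    rw [excess_trans ζ δ γ]
    linarith [hγδ.2, hδζ.2]

end BasedAffine

/-- One-dimensional transitivity of the relation `∼_M` for ordered base points.
An affine function with base point `a` is `t ↦ p + s * (t - a)`. -/
theorem rel_trans_one_dim (M : ℝ) (hM : 0 < M)
    (x y z : ℝ) (hxy : x < y) (hyz : y < z)
    (px py pz sx sy sz : ℝ)
    (hxy1 : px - (py + sy * (x - y)) ≥ (1 / (2 * M)) * (sx - sy) ^ 2)
    (hxy2 : py - (px + sx * (y - x)) ≥ (1 / (2 * M)) * (sx - sy) ^ 2)
    (hyz1 : py - (pz + sz * (y - z)) ≥ (1 / (2 * M)) * (sy - sz) ^ 2)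
    (hyz2 : pz - (py + sy * (z - y)) ≥ (1 / (2 * M)) * (sy - sz) ^ 2) :
    px - (pz + sz * (x - z)) ≥ (1 / (2 * M)) * (sx - sz) ^ 2 ∧
    pz - (px + sx * (z - x)) ≥ (1 / (2 * M)) * (sx - sz) ^ 2 :=
  BasedAffine.Related.trans (γ := ⟨x, px, sx⟩) (δ := ⟨y, py, sy⟩) (ζ := ⟨z, pz, sz⟩) hM
    ⟨hxy1, hxy2⟩ ⟨hyz1, hyz2⟩ hxy hyz
end

section
/- Let x, y ∈ ℝ be distinct, f defined at x and y, M > 0, and let γ_x be an affine function with γ_x(x) = f(x) satisfying 0 ≤ (D − γ_x')(y − x) ≤ (M/2)(y − x)², where D = (f(y)−f(x))/(y−x). Define γ_y affine with γ_y(y) = f(y) and slope γ_y' = γ_x' + sign(y−x)·√(2M|D − γ_x'||y − x|). Then γ_x ∼_M γ_y, i.e. f(x) − γ_y(x) ≥ (1/(2M))|γ_x' − γ_y'|² and f(y) − γ_x(y) ≥ (1/(2M))|γ_x' − γ_y'|². -/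
/-!
Write `P = (D - γ_x')(y - x) ≥ 0`. The slope jump is chosen so that `(γ_x' - γ_y')² = 2MP`,
which makes the second inequality an equality, `f(y) - γ_x(y) = P`. The first gap is
`f(x) - γ_y(x) = √(2MP)|y - x| - P`, and `√(2MP)|y - x| ≥ 2P` is exactly the upper bound
`P ≤ (M/2)(y - x)²`.
-/

namespace Real

theorem sign_mul_self_eq_abs (r : ℝ) : sign r * r = |r| := by
  rcases lt_trichotomy r 0 with hr | rfl | hr
  · rw [sign_of_neg hr, abs_of_neg hr, neg_one_mul]
  · simp
  · rw [sign_of_pos hr, abs_of_pos hr, one_mul]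

theorem sign_sq_of_ne_zero {r : ℝ} (hr : r ≠ 0) : sign r ^ 2 = 1 := by
  rcases sign_apply_eq_of_ne_zero r hr with h | h <;> simp [h]

end Real

theorem two_mul_le_sqrt_two_mul_mul_abs {M P h : ℝ} (hP : 0 ≤ P) (hPM : P ≤ M / 2 * h ^ 2) :
    2 * P ≤ √(2 * M * P) * |h| := by
  rw [← Real.sqrt_sq_eq_abs, ← Real.sqrt_mul' _ (sq_nonneg h)]
  exact Real.le_sqrt_of_sq_le (by nlinarith)

/-- Lemma 4.3 ('areflm'): given a jet at `x` compatible with the divided difference,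
the explicit jet at `y` with slope `γ_x' + sign(y−x)·√(2M|D − γ_x'||y − x|)`
satisfies `γ_x ∼_M γ_y`. -/
theorem compatible_jet_construction (M : ℝ) (hM : 0 < M)
    (x y fx fy sx : ℝ) (hxy : x ≠ y)
    (hs : 0 ≤ ((fy - fx) / (y - x) - sx) * (y - x) ∧
          ((fy - fx) / (y - x) - sx) * (y - x) ≤ (M / 2) * (y - x) ^ 2) :
    let D := (fy - fx) / (y - x)
    let sy := sx + Real.sign (y - x) * Real.sqrt (2 * M * |D - sx| * |y - x|)
    fx - (fy + sy * (x - y)) ≥ (1 / (2 * M)) * (sx - sy) ^ 2 ∧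
    fy - (fx + sx * (y - x)) ≥ (1 / (2 * M)) * (sx - sy) ^ 2 := by
  intro D sy
  obtain ⟨hP, hPM⟩ := hs
  have hyx : y - x ≠ 0 := sub_ne_zero.2 hxy.symm
  set P := (D - sx) * (y - x)
  have hsy : sy = sx + Real.sign (y - x) * √(2 * M * P) := by
    change sx + _ * √(2 * M * |D - sx| * |y - x|) = _
    rw [mul_assoc (2 * M), ← abs_mul, abs_of_nonneg hP]
  have gap_y : fy - (fx + sx * (y - x)) = P := by
    simp only [P, D]
    field_simp
    ring
  have gap_x : fx - (fy + sy * (x - y)) = √(2 * M * P) * |y - x| - P := by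
    rw [hsy, ← Real.sign_mul_self_eq_abs]
    linear_combination -gap_y
  have jump : 1 / (2 * M) * (sx - sy) ^ 2 = P := by
    rw [hsy, show (sx - (sx + Real.sign (y - x) * √(2 * M * P))) ^ 2
        = Real.sign (y - x) ^ 2 * √(2 * M * P) ^ 2 by ring,
      Real.sign_sq_of_ne_zero hyx, Real.sq_sqrt (by positivity)]
    field_simp
  rw [jump, gap_x, gap_y]
  exact ⟨by linarith [two_mul_le_sqrt_two_mul_mul_abs hP hPM], le_rfl⟩
end

section
/- Let E ⊂ ℝⁿ be closed, f : E → ℝ, M ≥ η > 0, and p, q ∈ (1,∞) with 1/p + 1/q = 1. Suppose affine polynomials (γ_x)_{x∈E} satisfy: (i) γ_x(x) = f(x) and γ_x(y) + (η/2)‖y−x‖² ≤ f(y) for all x ∈ E, y ∈ E\{x}; and (ii) γ_x ∼_M γ_y for all x, y ∈ E. For each x define the affine P_x with P_x(x) = f(x) − (η/(2p))‖x‖² and ∇P_x = ∇γ_x − (η/p)x. Then P_x ∼_{qM} P_y for all x, y ∈ E. -/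
/-!
Write `v = x - y`, `u = ∇γ_x - ∇γ_y` and `A = f x - γ_y(x)`. Subtracting `(t/2)‖·‖²` with
`t = η/p` turns `A` into `A - (t/2)‖v‖²` and `u` into `u - t v`. Adding the separation
inequalities at `x` and at `y` gives `⟪u, v⟫ ≥ η‖v‖²`, hence
`‖u - t v‖² ≤ 2MA - t(2η - t)‖v‖²`. The slack `(q - 1)M(2A - η‖v‖²) ≥ 0` left by passing from
`M` to `qM` then covers the loss `qMt‖v‖²`, because `(q - 1)η = qt` for conjugate exponents.
-/

open scoped RealInnerProductSpace

section
variable {F : Type*} [NormedAddCommGroup F] [InnerProductSpace ℝ F]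

/-- `f x - γ_y(x)`, where `γ_y z = f y + ⟪G y, z - y⟫` is the affine jet at `y`. -/
def jetGap (f : F → ℝ) (G : F → F) (x y : F) : ℝ := f x - (f y + ⟪G y, x - y⟫)

def JetCompatible (M : ℝ) (f : F → ℝ) (G : F → F) (x y : F) : Prop :=
  1 / (2 * M) * ‖G x - G y‖ ^ 2 ≤ jetGap f G x y

theorem jetGap_add_jetGap (f : F → ℝ) (G : F → F) (x y : F) :
    jetGap f G x y + jetGap f G y x = ⟪G x - G y, x - y⟫ := by
  rw [jetGap, jetGap, ← neg_sub x y, inner_neg_right, inner_sub_left]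
  ring

theorem jetGap_sub_quadratic (f : F → ℝ) (G : F → F) (t : ℝ) (x y : F) :
    jetGap (fun z => f z - t / 2 * ‖z‖ ^ 2) (fun z => G z - t • z) x y =
      jetGap f G x y - t / 2 * ‖x - y‖ ^ 2 := by
  have hx : ‖x‖ ^ 2 = ‖y‖ ^ 2 + 2 * ⟪y, x - y⟫ + ‖x - y‖ ^ 2 := by
    rw [← norm_add_sq_real, add_sub_cancel]
  rw [jetGap, jetGap, inner_sub_left, real_inner_smul_left, hx]
  ring

theorem norm_sub_smul_sq_le {u v : F} {A M η p q : ℝ} (hpq : p.HolderConjugate q)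
    (hη : 0 ≤ η) (hM : 0 < M) (hu : ‖u‖ ^ 2 ≤ 2 * M * A) (hA : η / 2 * ‖v‖ ^ 2 ≤ A)
    (huv : η * ‖v‖ ^ 2 ≤ ⟪u, v⟫) :
    ‖u - (η / p) • v‖ ^ 2 ≤ 2 * (q * M) * (A - η / p / 2 * ‖v‖ ^ 2) := by
  set t := η / p
  have ht : 0 ≤ t := div_nonneg hη hpq.nonneg
  have ht_le : t ≤ η := div_le_self hη hpq.lt.le
  have hqt : q * t = (q - 1) * η := by
    calc q * t = (q - 1) * p * t := by rw [hpq.symm.sub_one_mul_conj]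
      _ = (q - 1) * η := by rw [mul_assoc, mul_div_cancel₀ _ hpq.ne_zero]
  calc ‖u - t • v‖ ^ 2 = ‖u‖ ^ 2 - 2 * t * ⟪u, v⟫ + t ^ 2 * ‖v‖ ^ 2 := by
        rw [norm_sub_sq_real, real_inner_smul_right, norm_smul, mul_pow, Real.norm_eq_abs, sq_abs]
        ring
    _ ≤ 2 * M * A - t * (2 * η - t) * ‖v‖ ^ 2 := by
        nlinarith [mul_le_mul_of_nonneg_left huv ht]
    _ ≤ 2 * (q * M) * (A - t / 2 * ‖v‖ ^ 2) := by
        have h1 : 0 ≤ (q - 1) * M * (2 * A - η * ‖v‖ ^ 2) :=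
          mul_nonneg (mul_nonneg hpq.symm.sub_one_pos.le hM.le) (by linarith)
        have h2 : 0 ≤ t * (2 * η - t) * ‖v‖ ^ 2 :=
          mul_nonneg (mul_nonneg ht (by linarith)) (sq_nonneg _)
        linear_combination h1 + h2 + M * ‖v‖ ^ 2 * hqt

theorem JetCompatible.sub_quadratic {f : F → ℝ} {G : F → F} {x y : F} {M η p q : ℝ}
    (h : JetCompatible M f G x y) (hpq : p.HolderConjugate q) (hη : 0 ≤ η) (hM : 0 < M)
    (hgap : η / 2 * ‖x - y‖ ^ 2 ≤ jetGap f G x y)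
    (hmono : η * ‖x - y‖ ^ 2 ≤ ⟪G x - G y, x - y⟫) :
    JetCompatible (q * M) (fun z => f z - η / p / 2 * ‖z‖ ^ 2) (fun z => G z - (η / p) • z)
      x y := by
  rw [JetCompatible, one_div_mul_eq_div, div_le_iff₀ (by positivity)] at h
  have hdiff : (G x - (η / p) • x) - (G y - (η / p) • y) = (G x - G y) - (η / p) • (x - y) := by
    rw [smul_sub]; abel
  rw [JetCompatible, jetGap_sub_quadratic, hdiff, one_div_mul_eq_div,
    div_le_iff₀' (mul_pos two_pos (mul_pos hpq.symm.pos hM))]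
  exact norm_sub_smul_sq_le hpq hη hM (by linarith) hgap hmono

end

theorem jet_modification_general {n : ℕ}
    (E : Set (EuclideanSpace ℝ (Fin n)))
    (f : EuclideanSpace ℝ (Fin n) → ℝ)
    (G : EuclideanSpace ℝ (Fin n) → EuclideanSpace ℝ (Fin n))
    (M η p q : ℝ) (hη : 0 < η) (hηM : η ≤ M)
    (hp : 1 < p) (hpq : 1 / p + 1 / q = 1)
    (hsep : ∀ x ∈ E, ∀ y ∈ E, y ≠ x →
      f x + ⟪G x, y - x⟫ + (η / 2) * ‖y - x‖ ^ 2 ≤ f y)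
    (hrel : ∀ x ∈ E, ∀ y ∈ E,
      f x - (f y + ⟪G y, x - y⟫) ≥ (1 / (2 * M)) * ‖G x - G y‖ ^ 2) :
    ∀ x ∈ E, ∀ y ∈ E,
      (f x - (η / (2 * p)) * ‖x‖ ^ 2) -
        ((f y - (η / (2 * p)) * ‖y‖ ^ 2) + ⟪G y - (η / p) • y, x - y⟫) ≥
      (1 / (2 * (q * M))) * ‖(G x - (η / p) • x) - (G y - (η / p) • y)‖ ^ 2 := by
  intro x hx y hy
  obtain rfl | hxy := eq_or_ne x y
  · simp
  have hconj : p.HolderConjugate q :=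
    Real.holderConjugate_iff.2 ⟨hp, by simpa only [one_div] using hpq⟩
  have gap_xy : η / 2 * ‖x - y‖ ^ 2 ≤ jetGap f G x y := by
    have := hsep y hy x hx hxy
    rw [jetGap]; linarith
  have gap_yx : η / 2 * ‖x - y‖ ^ 2 ≤ jetGap f G y x := by
    have := hsep x hx y hy hxy.symm
    rw [jetGap, norm_sub_rev]; linarith
  have hmono : η * ‖x - y‖ ^ 2 ≤ ⟪G x - G y, x - y⟫ := by
    rw [← jetGap_add_jetGap]; linarith
  rw [show η / (2 * p) = η / p / 2 by ring]
  exact JetCompatible.sub_quadratic (hrel x hx y hy) hconj hη.le (hη.trans_le hηM) gap_xy hmono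

/-- Lemma 2.8 ('flexsc'): modifying jets satisfying the strong-convexity separation by
subtracting the quadratic `(η/(2p))‖x‖²` preserves Whitney compatibility with constant `qM`.
Here `γ_x(z) = f x + ⟪G x, z - x⟫` and `P_x(z) = (f x - (η/(2p))‖x‖²) + ⟪G x - (η/p)x, z - x⟫`. -/
theorem jet_modification {n : ℕ}
    (E : Set (EuclideanSpace ℝ (Fin n))) (hE : IsClosed E)
    (f : EuclideanSpace ℝ (Fin n) → ℝ)
    (G : EuclideanSpace ℝ (Fin n) → EuclideanSpace ℝ (Fin n))
    (M η p q : ℝ) (hη : 0 < η) (hηM : η ≤ M)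
    (hp : 1 < p) (hq : 1 < q) (hpq : 1 / p + 1 / q = 1)
    (hsep : ∀ x ∈ E, ∀ y ∈ E, y ≠ x →
      f x + ⟪G x, y - x⟫ + (η / 2) * ‖y - x‖ ^ 2 ≤ f y)
    (hrel : ∀ x ∈ E, ∀ y ∈ E,
      f x - (f y + ⟪G y, x - y⟫) ≥ (1 / (2 * M)) * ‖G x - G y‖ ^ 2) :
    ∀ x ∈ E, ∀ y ∈ E,
      (f x - (η / (2 * p)) * ‖x‖ ^ 2) -
        ((f y - (η / (2 * p)) * ‖y‖ ^ 2) + ⟪G y - (η / p) • y, x - y⟫) ≥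
      (1 / (2 * (q * M))) * ‖(G x - (η / p) • x) - (G y - (η / p) • y)‖ ^ 2 :=
  jet_modification_general E f G M η p q hη hηM hp hpq hsep hrel
end

section
/- Let E ⊂ ℝⁿ be closed, f : E → ℝ, M ≥ η > 0, and p, q ∈ (1,∞) with 1/p + 1/q = 1. Suppose affine polynomials (γ_x)_{x∈E} satisfy γ_x(x) = f(x), γ_x(y) + (η/2)‖y−x‖² ≤ f(y) for all y ∈ E\{x}, and γ_x ∼_M γ_y for all x, y ∈ E. Then there exists an (η/p)-strongly convex function F ∈ C^{1,1}(ℝⁿ) with J_xF = γ_x for all x ∈ E and Lip(∇F) ≤ qM + η/p ≤ (q+1)M. -/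
open scoped RealInnerProductSpace
open Filter Topology Set

/-!
Subtracting `(η/p)/2 ‖x‖²` from the jets turns the `η`-separation and the `M`-compatibility into
`qM`-compatibility: weigh the two lower bounds on `f x - γ_y(x)` by `1/q` and `1/p`.

Jets `γ_y` that are `L`-compatible are extended by the Moreau envelope
`F x = inf {t + L/2 ‖x - w‖² | (w, t) ∈ C}` of the convex function whose epigraph `C` lies above
every `w ↦ γ_y(w) + ‖∇γ_y‖² / (2L)`. The inf-convolution of this affine function with
`L/2 ‖·‖²` is `γ_y` itself, so `F ≥ γ_y`; compatibility says exactly that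
`(x - ∇γ_x / L, γ_x(x) - ‖∇γ_x‖² / (2L)) ∈ C`, which gives `F x ≤ f x`. The proximal point
`(w, t)` of `x` makes `L (x - w)` a gradient of `F` with
`0 ≤ F z - F x - ⟪L (x - w), z - x⟫ ≤ L/2 ‖z - x‖²`, and these two-sided bounds give convexity
and an `L`-Lipschitz gradient. Adding the quadratic back yields the theorem.
-/

lemma le_of_forall_le_add_mul {a b c : ℝ} (h : ∀ θ : ℝ, 0 < θ → θ ≤ 1 → a ≤ b + θ * c) :
    a ≤ b := by
  have hlim : Tendsto (fun θ : ℝ => b + θ * c) (𝓝[>] 0) (𝓝 b) := by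
    have : Continuous fun θ : ℝ => b + θ * c := by fun_prop
    simpa using (this.tendsto 0).mono_left nhdsWithin_le_nhds
  refine ge_of_tendsto hlim ?_
  filter_upwards [Ioo_mem_nhdsGT one_pos] with θ hθ using h θ hθ.1 hθ.2.le

section InnerProductSpace

variable {V : Type*} [NormedAddCommGroup V] [InnerProductSpace ℝ V]

lemma neg_div_le_half_mul_norm_sq_add_inner {L : ℝ} (hL : 0 < L) (a b : V) :
    -(‖b‖ ^ 2 / (2 * L)) ≤ L / 2 * ‖a‖ ^ 2 + ⟪b, a⟫ := by
  have hsq : L / 2 * ‖a‖ ^ 2 + ⟪b, a⟫ + ‖b‖ ^ 2 / (2 * L) = ‖L • a + b‖ ^ 2 / (2 * L) := by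
    rw [norm_add_sq_real, norm_smul, real_inner_smul_left, Real.norm_eq_abs, mul_pow, sq_abs,
      real_inner_comm a b]
    field_simp
  linarith [show 0 ≤ ‖L • a + b‖ ^ 2 / (2 * L) by positivity]

lemma half_mul_norm_sq_sub_sub_inner (c : ℝ) (x z : V) :
    c / 2 * ‖z‖ ^ 2 - c / 2 * ‖x‖ ^ 2 - ⟪c • x, z - x⟫ = c / 2 * ‖z - x‖ ^ 2 := by
  rw [norm_sub_sq_real, real_inner_smul_left, inner_sub_right, real_inner_self_eq_norm_sq,
    real_inner_comm]
  ring

lemma convexOn_univ_of_inner_le_sub {F : V → ℝ} {g : V → V}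
    (h : ∀ x z, ⟪g x, z - x⟫ ≤ F z - F x) : ConvexOn ℝ univ F := by
  refine ⟨convex_univ, fun x _ y _ a b ha hb hab => ?_⟩
  set m := a • x + b • y
  have hbal : a • (x - m) + b • (y - m) = 0 := by
    simp only [smul_sub, m]
    rw [sub_add_sub_comm, ← add_smul, hab, one_smul, sub_self]
  have hinner : a * ⟪g m, x - m⟫ + b * ⟪g m, y - m⟫ = 0 := by
    rw [← real_inner_smul_right, ← real_inner_smul_right, ← inner_add_right, hbal,
      inner_zero_right]
  have hx := mul_le_mul_of_nonneg_left (h m x) ha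
  have hy := mul_le_mul_of_nonneg_left (h m y) hb
  have hFm : F m = a * F m + b * F m := by rw [← add_mul, hab, one_mul]
  simp only [smul_eq_mul]
  linarith

lemma hasGradientAt_of_inner_le_sub_of_sub_le [CompleteSpace V] {F : V → ℝ} {v x : V} {c : ℝ}
    (hlow : ∀ z, ⟪v, z - x⟫ ≤ F z - F x) (hup : ∀ z, F z - F x - ⟪v, z - x⟫ ≤ c * ‖z - x‖ ^ 2) :
    HasGradientAt F v x := by
  rw [hasGradientAt_iff_hasFDerivAt, hasFDerivAt_iff_isLittleO_nhds_zero]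
  refine (Asymptotics.IsBigO.of_bound c (Eventually.of_forall fun h => ?_)).trans_isLittleO
    (Asymptotics.isLittleO_norm_pow_id one_lt_two)
  have h₁ := hlow (x + h)
  have h₂ := hup (x + h)
  simp only [add_sub_cancel_left] at h₁ h₂
  rw [InnerProductSpace.toDual_apply_apply, Real.norm_eq_abs, abs_le, norm_pow, norm_norm]
  constructor <;> nlinarith [sq_nonneg ‖h‖]

lemma eq_of_inner_le_sub_of_sub_le {F : V → ℝ} {v w x : V} {c : ℝ}
    (hlow : ∀ z, ⟪v, z - x⟫ ≤ F z - F x) (hup : ∀ z, F z - F x - ⟪w, z - x⟫ ≤ c * ‖z - x‖ ^ 2) :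
    v = w := by
  set d := v - w
  suffices ‖d‖ ^ 2 ≤ 0 by
    rw [← sub_eq_zero]
    exact norm_eq_zero.1 (pow_eq_zero_iff two_ne_zero |>.1 (le_antisymm this (by positivity)))
  refine le_of_forall_le_add_mul (c := c * ‖d‖ ^ 2) fun θ hθ _ => ?_
  have h₁ := hlow (x + θ • d)
  have h₂ := hup (x + θ • d)
  simp only [add_sub_cancel_left, real_inner_smul_right, norm_smul, Real.norm_eq_abs,
    abs_of_pos hθ] at h₁ h₂
  have hd : ⟪v, d⟫ - ⟪w, d⟫ = ‖d‖ ^ 2 := by rw [← inner_sub_left, real_inner_self_eq_norm_sq]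
  have : θ * ‖d‖ ^ 2 ≤ θ * (0 + θ * (c * ‖d‖ ^ 2)) := by nlinarith
  exact le_of_mul_le_mul_left this hθ

variable {F : V → ℝ} {g : V → V} {L : ℝ}

lemma inner_add_norm_sq_le_sub (hL : 0 < L) (hlow : ∀ x z, ⟪g x, z - x⟫ ≤ F z - F x)
    (hup : ∀ x z, F z - F x - ⟪g x, z - x⟫ ≤ L / 2 * ‖z - x‖ ^ 2) (x z : V) :
    ⟪g x, z - x⟫ + 1 / (2 * L) * ‖g z - g x‖ ^ 2 ≤ F z - F x := by
  set d := g z - g x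
  have h₁ := hlow x (z - L⁻¹ • d)
  have h₂ := hup z (z - L⁻¹ • d)
  rw [sub_right_comm, inner_sub_right, real_inner_smul_right] at h₁
  rw [sub_sub_cancel_left, inner_neg_right, real_inner_smul_right, norm_neg, norm_smul,
    Real.norm_eq_abs, abs_of_pos (inv_pos.2 hL), mul_pow] at h₂
  have hd : ⟪g z, d⟫ - ⟪g x, d⟫ = ‖d‖ ^ 2 := by rw [← inner_sub_left, real_inner_self_eq_norm_sq]
  have hd' : L⁻¹ * ⟪g z, d⟫ - L⁻¹ * ⟪g x, d⟫ = L⁻¹ * ‖d‖ ^ 2 := by rw [← mul_sub, hd]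
  have hL' : L / 2 * (L⁻¹ ^ 2 * ‖d‖ ^ 2) = L⁻¹ * ‖d‖ ^ 2 - 1 / (2 * L) * ‖d‖ ^ 2 := by
    field_simp; ring
  linarith

lemma norm_sub_le_mul_norm_sub (hL : 0 < L) (hlow : ∀ x z, ⟪g x, z - x⟫ ≤ F z - F x)
    (hup : ∀ x z, F z - F x - ⟪g x, z - x⟫ ≤ L / 2 * ‖z - x‖ ^ 2) (x z : V) :
    ‖g x - g z‖ ≤ L * ‖x - z‖ := by
  have h₁ := inner_add_norm_sq_le_sub hL hlow hup x z
  have h₂ := inner_add_norm_sq_le_sub hL hlow hup z x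
  have hmono : ‖g x - g z‖ ^ 2 ≤ L * ⟪g x - g z, x - z⟫ := by
    have hsum : ⟪g x - g z, x - z⟫ = -(⟪g x, z - x⟫ + ⟪g z, x - z⟫) := by
      rw [inner_sub_left, ← neg_sub z x, inner_neg_right, inner_neg_right]
      ring
    have hhalf : 1 / (2 * L) * ‖g x - g z‖ ^ 2 + 1 / (2 * L) * ‖g x - g z‖ ^ 2
        = ‖g x - g z‖ ^ 2 / L := by
      field_simp; ring
    rw [norm_sub_rev (g z)] at h₁
    rw [← div_le_iff₀' hL]
    linarith
  have hcs := mul_le_mul_of_nonneg_left (real_inner_le_norm (g x - g z) (x - z)) hL.le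
  nlinarith [norm_nonneg (g x - g z), mul_nonneg hL.le (norm_nonneg (x - z))]

end InnerProductSpace

section MoreauEnvelope

variable {V : Type*} [NormedAddCommGroup V] {L : ℝ} {C : Set (V × ℝ)}

/-- The Moreau envelope `x ↦ inf_w (h w + L/2 ‖x - w‖²)` of the function `h` whose epigraph is
`C`. -/
noncomputable def moreauEnv (L : ℝ) (C : Set (V × ℝ)) (x : V) : ℝ :=
  sInf ((fun c : V × ℝ => c.2 + L / 2 * ‖x - c.1‖ ^ 2) '' C)

lemma le_moreauEnv (hne : C.Nonempty) {x : V} {r : ℝ}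
    (h : ∀ c ∈ C, r ≤ c.2 + L / 2 * ‖x - c.1‖ ^ 2) : r ≤ moreauEnv L C x :=
  le_csInf (hne.image _) (forall_mem_image.2 h)

variable [InnerProductSpace ℝ V] {a : V} {b : ℝ}

lemma bddBelow_moreauEnv_image (hL : 0 < L) (ha : ∀ c ∈ C, ⟪a, c.1⟫ + b ≤ c.2) (x : V) :
    BddBelow ((fun c : V × ℝ => c.2 + L / 2 * ‖x - c.1‖ ^ 2) '' C) := by
  refine ⟨⟪a, x⟫ + b - ‖a‖ ^ 2 / (2 * L), ?_⟩
  rintro _ ⟨c, hc, rfl⟩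
  dsimp only
  have h := neg_div_le_half_mul_norm_sq_add_inner hL (c.1 - x) a
  rw [inner_sub_right, norm_sub_rev] at h
  linarith [ha c hc]

lemma moreauEnv_le (hL : 0 < L) (ha : ∀ c ∈ C, ⟪a, c.1⟫ + b ≤ c.2) {c : V × ℝ} (hc : c ∈ C)
    (x : V) : moreauEnv L C x ≤ c.2 + L / 2 * ‖x - c.1‖ ^ 2 :=
  csInf_le (bddBelow_moreauEnv_image hL ha x) (mem_image_of_mem _ hc)

lemma moreauEnv_le_midpoint (hL : 0 < L) (hC : Convex ℝ C) (ha : ∀ c ∈ C, ⟪a, c.1⟫ + b ≤ c.2)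
    {u v : V × ℝ} (hu : u ∈ C) (hv : v ∈ C) (x : V) :
    moreauEnv L C x ≤ (u.2 + L / 2 * ‖x - u.1‖ ^ 2 + (v.2 + L / 2 * ‖x - v.1‖ ^ 2)) / 2
      - L / 8 * ‖u.1 - v.1‖ ^ 2 := by
  have hmid : (1 / 2 : ℝ) • u + (1 / 2 : ℝ) • v ∈ C :=
    hC hu hv (by norm_num) (by norm_num) (by norm_num)
  have h := moreauEnv_le hL ha hmid x
  have hpar := parallelogram_law_with_norm ℝ (x - u.1) (x - v.1)
  have e₁ : x - ((1 / 2 : ℝ) • u + (1 / 2 : ℝ) • v).1 = (1 / 2 : ℝ) • ((x - u.1) + (x - v.1)) := by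
    simp only [Prod.fst_add, Prod.smul_fst]; module
  have e₂ : (x - u.1) - (x - v.1) = -(u.1 - v.1) := by abel
  rw [e₁, norm_smul, Real.norm_eq_abs, abs_of_pos (by norm_num), mul_pow] at h
  rw [e₂, norm_neg] at hpar
  simp only [Prod.snd_add, Prod.smul_snd, smul_eq_mul] at h
  nlinarith

lemma exists_moreauEnv_eq [CompleteSpace V] (hL : 0 < L) (hC : Convex ℝ C) (hCc : IsClosed C)
    (hne : C.Nonempty) (ha : ∀ c ∈ C, ⟪a, c.1⟫ + b ≤ c.2) (x : V) :
    ∃ c ∈ C, c.2 + L / 2 * ‖x - c.1‖ ^ 2 = moreauEnv L C x := by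
  set m := moreauEnv L C x
  have happrox : ∀ n : ℕ, ∃ c ∈ C, c.2 + L / 2 * ‖x - c.1‖ ^ 2 < m + 1 / (n + 1) := by
    intro n
    have hpos : (0 : ℝ) < 1 / (n + 1) := by positivity
    obtain ⟨_, ⟨c, hc, rfl⟩, hlt⟩ :=
      exists_lt_of_csInf_lt (hne.image _) (lt_add_of_pos_right m hpos)
    exact ⟨c, hc, hlt⟩
  choose s hsC hs using happrox
  have hval : Tendsto (fun n => (s n).2 + L / 2 * ‖x - (s n).1‖ ^ 2) atTop (𝓝 m) := by
    refine tendsto_of_tendsto_of_tendsto_of_le_of_le tendsto_const_nhds ?_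
      (fun n => moreauEnv_le hL ha (hsC n) x) (fun n => (hs n).le)
    simpa using tendsto_one_div_add_atTop_nhds_zero_nat.const_add m
  have hcauchy : CauchySeq fun n => (s n).1 := by
    rw [Metric.cauchySeq_iff']
    intro ε hε
    obtain ⟨N, hN⟩ := exists_nat_one_div_lt (by positivity : 0 < L / 8 * ε ^ 2)
    refine ⟨N, fun n hn => ?_⟩
    have hmono : (1 : ℝ) / (n + 1) ≤ 1 / (N + 1) := by gcongr
    have hmid := moreauEnv_le_midpoint hL hC ha (hsC n) (hsC N) x
    have hsq : L / 8 * ‖(s n).1 - (s N).1‖ ^ 2 < L / 8 * ε ^ 2 := by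
      linarith [hs n, hs N]
    rw [dist_eq_norm]
    exact (pow_lt_pow_iff_left₀ (norm_nonneg _) hε.le two_ne_zero).1
      (lt_of_mul_lt_mul_left hsq (by positivity))
  obtain ⟨w, hw⟩ := cauchySeq_tendsto_of_complete hcauchy
  have hsnd : Tendsto (fun n => (s n).2) atTop (𝓝 (m - L / 2 * ‖x - w‖ ^ 2)) := by
    have := hval.sub ((((tendsto_const_nhds (x := x)).sub hw).norm.pow 2).const_mul (L / 2))
    simpa using this
  refine ⟨(w, m - L / 2 * ‖x - w‖ ^ 2), hCc.mem_of_tendsto (hw.prodMk_nhds hsnd)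
    (Eventually.of_forall hsC), by ring⟩

lemma inner_le_of_moreauEnv_eq (hL : 0 < L) (hC : Convex ℝ C) (ha : ∀ c ∈ C, ⟪a, c.1⟫ + b ≤ c.2)
    {x : V} {c₀ c : V × ℝ} (hc₀ : c₀ ∈ C) (hmin : c₀.2 + L / 2 * ‖x - c₀.1‖ ^ 2 = moreauEnv L C x)
    (hc : c ∈ C) : L * ⟪x - c₀.1, c.1 - c₀.1⟫ ≤ c.2 - c₀.2 := by
  refine le_of_forall_le_add_mul (c := L / 2 * ‖c.1 - c₀.1‖ ^ 2) fun θ hθ hθ₁ => ?_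
  have h := moreauEnv_le hL ha (hC.add_smul_sub_mem hc₀ hc ⟨hθ.le, hθ₁⟩) x
  have e : x - (c₀ + θ • (c - c₀)).1 = (x - c₀.1) - θ • (c.1 - c₀.1) := by
    simp only [Prod.fst_add, Prod.smul_fst, Prod.fst_sub]; abel
  rw [← hmin, e, norm_sub_sq_real (x - c₀.1), real_inner_smul_right, norm_smul, Real.norm_eq_abs,
    abs_of_pos hθ, mul_pow] at h
  simp only [Prod.snd_add, Prod.smul_snd, Prod.snd_sub, smul_eq_mul] at h
  have : θ * (L * ⟪x - c₀.1, c.1 - c₀.1⟫) ≤ θ * (c.2 - c₀.2 + θ * (L / 2 * ‖c.1 - c₀.1‖ ^ 2)) := by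
    nlinarith
  exact le_of_mul_le_mul_left this hθ

lemma inner_le_moreauEnv_sub (hL : 0 < L) (hC : Convex ℝ C) (hne : C.Nonempty)
    (ha : ∀ c ∈ C, ⟪a, c.1⟫ + b ≤ c.2) {x : V} {c₀ : V × ℝ} (hc₀ : c₀ ∈ C)
    (hmin : c₀.2 + L / 2 * ‖x - c₀.1‖ ^ 2 = moreauEnv L C x) (z : V) :
    ⟪L • (x - c₀.1), z - x⟫ ≤ moreauEnv L C z - moreauEnv L C x := by
  rw [le_sub_iff_add_le', ← hmin]
  refine le_moreauEnv hne fun c hc => ?_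
  have hvar := inner_le_of_moreauEnv_eq hL hC ha hc₀ hmin hc
  -- the slack is `L/2 ‖(x - c₀.1) + (c.1 - z)‖² ≥ 0`
  have e : c.1 - c₀.1 = (x - c₀.1) + (c.1 - z) + (z - x) := by abel
  rw [e, inner_add_right, inner_add_right, real_inner_self_eq_norm_sq] at hvar
  rw [real_inner_smul_left, ← norm_neg (z - c.1), neg_sub]
  nlinarith [norm_add_sq_real (x - c₀.1) (c.1 - z), sq_nonneg ‖(x - c₀.1) + (c.1 - z)‖]

lemma moreauEnv_sub_sub_inner_le (hL : 0 < L) (ha : ∀ c ∈ C, ⟪a, c.1⟫ + b ≤ c.2) {x : V}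
    {c₀ : V × ℝ} (hc₀ : c₀ ∈ C) (hmin : c₀.2 + L / 2 * ‖x - c₀.1‖ ^ 2 = moreauEnv L C x) (z : V) :
    moreauEnv L C z - moreauEnv L C x - ⟪L • (x - c₀.1), z - x⟫ ≤ L / 2 * ‖z - x‖ ^ 2 := by
  have h := moreauEnv_le hL ha hc₀ z
  rw [show z - c₀.1 = (z - x) + (x - c₀.1) by abel, norm_add_sq_real, real_inner_comm] at h
  rw [← hmin, real_inner_smul_left]
  linarith

theorem exists_moreauEnv_inner_le_sub [CompleteSpace V] (hL : 0 < L) (hC : Convex ℝ C)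
    (hCc : IsClosed C) (hne : C.Nonempty) (ha : ∀ c ∈ C, ⟪a, c.1⟫ + b ≤ c.2) :
    ∃ g : V → V, (∀ x z, ⟪g x, z - x⟫ ≤ moreauEnv L C z - moreauEnv L C x) ∧
      ∀ x z, moreauEnv L C z - moreauEnv L C x - ⟪g x, z - x⟫ ≤ L / 2 * ‖z - x‖ ^ 2 := by
  choose c hc hmin using exists_moreauEnv_eq hL hC hCc hne ha
  exact ⟨fun x => L • (x - (c x).1), fun x => inner_le_moreauEnv_sub hL hC hne ha (hc x) (hmin x),
    fun x => moreauEnv_sub_sub_inner_le hL ha (hc x) (hmin x)⟩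

end MoreauEnvelope

section Jets

variable {V : Type*} [NormedAddCommGroup V] [InnerProductSpace ℝ V]
  {E : Set V} {f : V → ℝ} {G : V → V} {L : ℝ}

/-- The jets `γ_x = f x + ⟪G x, · - x⟫`, `x ∈ E`, satisfy `γ_x ∼_L γ_y` for all `x, y ∈ E`. -/
def JetsCompatible (E : Set V) (f : V → ℝ) (G : V → V) (L : ℝ) : Prop :=
  ∀ x ∈ E, ∀ y ∈ E, f x - (f y + ⟪G y, x - y⟫) ≥ 1 / (2 * L) * ‖G x - G y‖ ^ 2

/-- The epigraph of `w ↦ sup_{y ∈ E} (γ_y w + ‖G y‖² / (2L))`; its Moreau envelope extends the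
jets. -/
def tangentEpigraph (E : Set V) (f : V → ℝ) (G : V → V) (L : ℝ) : Set (V × ℝ) :=
  {c | ∀ y ∈ E, f y + ⟪G y, c.1 - y⟫ + ‖G y‖ ^ 2 / (2 * L) ≤ c.2}

lemma convex_tangentEpigraph : Convex ℝ (tangentEpigraph E f G L) := by
  intro u hu v hv s t hs ht hst y hy
  have hcomb : f y + ⟪G y, (s • u + t • v).1 - y⟫ + ‖G y‖ ^ 2 / (2 * L)
      = s * (f y + ⟪G y, u.1 - y⟫ + ‖G y‖ ^ 2 / (2 * L))
        + t * (f y + ⟪G y, v.1 - y⟫ + ‖G y‖ ^ 2 / (2 * L)) := by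
    simp only [Prod.fst_add, Prod.smul_fst, inner_sub_right, inner_add_right,
      real_inner_smul_right]
    linear_combination (f y - ⟪G y, y⟫ + ‖G y‖ ^ 2 / (2 * L)) * hst.symm
  simp only [hcomb, Prod.snd_add, Prod.smul_snd, smul_eq_mul]
  exact add_le_add (mul_le_mul_of_nonneg_left (hu y hy) hs) (mul_le_mul_of_nonneg_left (hv y hy) ht)

lemma isClosed_tangentEpigraph : IsClosed (tangentEpigraph E f G L) := by
  have : tangentEpigraph E f G L
      = ⋂ y ∈ E, {c | f y + ⟪G y, c.1 - y⟫ + ‖G y‖ ^ 2 / (2 * L) ≤ c.2} := by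
    ext; simp [tangentEpigraph]
  rw [this]
  exact isClosed_biInter fun y _ => isClosed_le (by fun_prop) continuous_snd

lemma mk_mem_tangentEpigraph (hL : 0 < L) (hfG : JetsCompatible E f G L) {x : V} (hx : x ∈ E) :
    (x - L⁻¹ • G x, f x - ‖G x‖ ^ 2 / (2 * L)) ∈ tangentEpigraph E f G L := by
  intro y hy
  have h := hfG x hx y hy
  have e : ‖G x - G y‖ ^ 2 / (2 * L)
      = ‖G x‖ ^ 2 / (2 * L) + ‖G y‖ ^ 2 / (2 * L) - L⁻¹ * ⟪G y, G x⟫ := by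
    rw [norm_sub_sq_real, real_inner_comm]
    field_simp
    ring
  rw [sub_right_comm, inner_sub_right, real_inner_smul_right]
  rw [one_div_mul_eq_div] at h
  linarith [inner_sub_right (𝕜 := ℝ) (G y) x y]

lemma jet_le_moreauEnv (hL : 0 < L) {y : V} (hy : y ∈ E) (hne : (tangentEpigraph E f G L).Nonempty)
    (z : V) : f y + ⟪G y, z - y⟫ ≤ moreauEnv L (tangentEpigraph E f G L) z := by
  refine le_moreauEnv hne fun c hc => ?_
  have h := neg_div_le_half_mul_norm_sq_add_inner hL (c.1 - z) (G y)
  have e : ⟪G y, c.1 - y⟫ = ⟪G y, z - y⟫ + ⟪G y, c.1 - z⟫ := by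
    rw [← inner_add_right, sub_add_sub_cancel']
  rw [norm_sub_rev] at h
  linarith [hc y hy]

theorem exists_convex_extension [CompleteSpace V] (hL : 0 < L) (hfG : JetsCompatible E f G L) :
    ∃ (F : V → ℝ) (g : V → V), (∀ x ∈ E, F x = f x ∧ g x = G x) ∧
      (∀ x z, ⟪g x, z - x⟫ ≤ F z - F x) ∧
      ∀ x z, F z - F x - ⟪g x, z - x⟫ ≤ L / 2 * ‖z - x‖ ^ 2 := by
  rcases E.eq_empty_or_nonempty with rfl | ⟨y₀, hy₀⟩
  · exact ⟨0, 0, by simp, by simp, fun x z => by simp; positivity⟩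
  set C := tangentEpigraph E f G L
  have hne : C.Nonempty := ⟨_, mk_mem_tangentEpigraph hL hfG hy₀⟩
  have ha : ∀ c ∈ C, ⟪G y₀, c.1⟫ + (f y₀ - ⟪G y₀, y₀⟫ + ‖G y₀‖ ^ 2 / (2 * L)) ≤ c.2 := by
    intro c hc
    linarith [hc y₀ hy₀, inner_sub_right (𝕜 := ℝ) (G y₀) c.1 y₀]
  obtain ⟨g, hlow, hup⟩ :=
    exists_moreauEnv_inner_le_sub hL convex_tangentEpigraph isClosed_tangentEpigraph hne ha
  refine ⟨moreauEnv L C, g, fun x hx => ?_, hlow, hup⟩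
  have hval : moreauEnv L C x = f x := by
    refine le_antisymm ?_ (by simpa using jet_le_moreauEnv hL hx hne x)
    have h := moreauEnv_le hL ha (mk_mem_tangentEpigraph hL hfG hx) x
    rw [sub_sub_cancel, norm_smul, Real.norm_eq_abs, abs_of_pos (inv_pos.2 hL), mul_pow] at h
    have e : L / 2 * (L⁻¹ ^ 2 * ‖G x‖ ^ 2) = ‖G x‖ ^ 2 / (2 * L) := by field_simp
    linarith
  refine ⟨hval, (eq_of_inner_le_sub_of_sub_le (fun z => ?_) (hup x)).symm⟩
  linarith [jet_le_moreauEnv hL hx hne z]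

theorem JetsCompatible.sub_half_mul_norm_sq {M η p q : ℝ} (hfG : JetsCompatible E f G M)
    (hM : 0 < M) (hη : 0 ≤ η) (hp : 0 < p) (hq : 0 < q) (hpq : 1 / p + 1 / q = 1)
    (hsep : ∀ x ∈ E, ∀ y ∈ E, y ≠ x → f x + ⟪G x, y - x⟫ + η / 2 * ‖y - x‖ ^ 2 ≤ f y) :
    JetsCompatible E (fun x => f x - η / p / 2 * ‖x‖ ^ 2) (fun x => G x - (η / p) • x) (q * M) := by
  intro x hx y hy
  rcases eq_or_ne x y with rfl | hxy
  · simp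
  set A := f x - (f y + ⟪G y, x - y⟫)
  set s := ‖x - y‖ ^ 2
  set B := ⟪G x - G y, x - y⟫
  have hA₁ : 1 / (2 * M) * ‖G x - G y‖ ^ 2 ≤ A := hfG x hx y hy
  have hA₂ : η / 2 * s ≤ A := by linarith [hsep y hy x hx hxy]
  have hB : η * s ≤ B := by
    have h := hsep x hx y hy hxy.symm
    rw [← neg_sub x y, inner_neg_right, norm_neg] at h
    linarith [inner_sub_left (𝕜 := ℝ) (G x) (G y) (x - y)]
  have hA : 1 / (2 * (q * M)) * ‖G x - G y‖ ^ 2 + η / p / 2 * s ≤ A := by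
    have e : A = 1 / q * A + 1 / p * A := by linear_combination A * hpq.symm
    have h₁ := mul_le_mul_of_nonneg_left hA₁ (by positivity : (0 : ℝ) ≤ 1 / q)
    have h₂ := mul_le_mul_of_nonneg_left hA₂ (by positivity : (0 : ℝ) ≤ 1 / p)
    have e₁ : 1 / q * (1 / (2 * M) * ‖G x - G y‖ ^ 2) = 1 / (2 * (q * M)) * ‖G x - G y‖ ^ 2 := by
      field_simp
    have e₂ : 1 / p * (η / 2 * s) = η / p / 2 * s := by ring
    linarith
  have hGs : ‖(G x - (η / p) • x) - (G y - (η / p) • y)‖ ^ 2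
      = ‖G x - G y‖ ^ 2 - 2 * (η / p) * B + (η / p) ^ 2 * s := by
    rw [sub_sub_sub_comm, ← smul_sub, norm_sub_sq_real, real_inner_smul_right, norm_smul,
      Real.norm_eq_abs, mul_pow, sq_abs]
    ring
  have hfs : (f x - η / p / 2 * ‖x‖ ^ 2) - ((f y - η / p / 2 * ‖y‖ ^ 2)
      + ⟪G y - (η / p) • y, x - y⟫) = A - η / p / 2 * s := by
    rw [inner_sub_left]
    linarith [half_mul_norm_sq_sub_sub_inner (η / p) y x]
  have hηp : η / p * s ≤ 2 * B := by
    have hp₁ : 1 / p ≤ 1 := by linarith [one_div_pos.2 hq]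
    have : η / p ≤ η := div_le_self hη ((div_le_one hp).1 hp₁)
    nlinarith [sq_nonneg ‖x - y‖]
  show _ ≥ _
  rw [hGs, hfs]
  have hr : 0 ≤ 1 / (2 * (q * M)) := by positivity
  have hηp' := mul_le_mul_of_nonneg_left hηp (by positivity : 0 ≤ η / p)
  nlinarith [mul_le_mul_of_nonneg_left hηp' hr]

end Jets

theorem strongly_convex_jet_extension_general {n : ℕ}
    (E : Set (EuclideanSpace ℝ (Fin n)))
    (f : EuclideanSpace ℝ (Fin n) → ℝ)
    (G : EuclideanSpace ℝ (Fin n) → EuclideanSpace ℝ (Fin n))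
    (M η p q : ℝ) (hη : 0 < η) (hηM : η ≤ M)
    (hp : 1 < p) (hq : 1 < q) (hpq : 1 / p + 1 / q = 1)
    (hsep : ∀ x ∈ E, ∀ y ∈ E, y ≠ x →
      f x + ⟪G x, y - x⟫ + (η / 2) * ‖y - x‖ ^ 2 ≤ f y)
    (hrel : ∀ x ∈ E, ∀ y ∈ E,
      f x - (f y + ⟪G y, x - y⟫) ≥ (1 / (2 * M)) * ‖G x - G y‖ ^ 2) :
    ∃ (F : EuclideanSpace ℝ (Fin n) → ℝ)
      (g : EuclideanSpace ℝ (Fin n) → EuclideanSpace ℝ (Fin n)),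
      ConvexOn ℝ Set.univ (fun x => F x - ((η / p) / 2) * ‖x‖ ^ 2) ∧
      (∀ x, HasGradientAt F (g x) x) ∧
      (∀ x ∈ E, F x = f x ∧ g x = G x) ∧
      (∀ a b, ‖g a - g b‖ ≤ (q * M + η / p) * ‖a - b‖) ∧
      q * M + η / p ≤ (q + 1) * M := by
  have hM : 0 < M := hη.trans_le hηM
  have hηp : η / p ≤ η := div_le_self hη.le hp.le
  obtain ⟨F₀, g₀, hext, hlow, hup⟩ := exists_convex_extension (by positivity)
    (JetsCompatible.sub_half_mul_norm_sq hrel hM hη.le (by positivity) (by positivity) hpq hsep)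
  set F := fun x => F₀ x + η / p / 2 * ‖x‖ ^ 2
  set g := fun x => g₀ x + (η / p) • x
  have hrem : ∀ x z, F z - F x - ⟪g x, z - x⟫
      = F₀ z - F₀ x - ⟪g₀ x, z - x⟫ + η / p / 2 * ‖z - x‖ ^ 2 := fun x z => by
    rw [← half_mul_norm_sq_sub_sub_inner, inner_add_left]
    ring
  have hlow' : ∀ x z, ⟪g x, z - x⟫ ≤ F z - F x := fun x z => by
    have : 0 ≤ η / p / 2 * ‖z - x‖ ^ 2 := by positivity
    linarith [hrem x z, hlow x z]
  have hup' : ∀ x z, F z - F x - ⟪g x, z - x⟫ ≤ (q * M + η / p) / 2 * ‖z - x‖ ^ 2 := fun x z => by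
    linarith [hrem x z, hup x z]
  refine ⟨F, g, ?_, fun x => hasGradientAt_of_inner_le_sub_of_sub_le (hlow' x) (hup' x),
    fun x hx => ?_, norm_sub_le_mul_norm_sub (by positivity) hlow' hup', by linarith⟩
  · simpa [F] using convexOn_univ_of_inner_le_sub hlow
  · obtain ⟨hF, hg⟩ := hext x hx
    exact ⟨by simp [F, hF], by simp [g, hg]⟩

/-- Proposition 2.7 ('scprop'): jets satisfying the strong-convexity separation with
constant `η` and the Whitney compatibility `∼_M` admit an `(η/p)`-strongly convex
`C^{1,1}` extension with `Lip(∇F) ≤ qM + η/p ≤ (q+1)M`.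
Here `γ_x(z) = f x + ⟪G x, z - x⟫`. -/
theorem strongly_convex_jet_extension {n : ℕ}
    (E : Set (EuclideanSpace ℝ (Fin n))) (hE : IsClosed E)
    (f : EuclideanSpace ℝ (Fin n) → ℝ)
    (G : EuclideanSpace ℝ (Fin n) → EuclideanSpace ℝ (Fin n))
    (M η p q : ℝ) (hη : 0 < η) (hηM : η ≤ M)
    (hp : 1 < p) (hq : 1 < q) (hpq : 1 / p + 1 / q = 1)
    (hsep : ∀ x ∈ E, ∀ y ∈ E, y ≠ x →
      f x + ⟪G x, y - x⟫ + (η / 2) * ‖y - x‖ ^ 2 ≤ f y)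
    (hrel : ∀ x ∈ E, ∀ y ∈ E,
      f x - (f y + ⟪G y, x - y⟫) ≥ (1 / (2 * M)) * ‖G x - G y‖ ^ 2) :
    ∃ (F : EuclideanSpace ℝ (Fin n) → ℝ)
      (g : EuclideanSpace ℝ (Fin n) → EuclideanSpace ℝ (Fin n)),
      ConvexOn ℝ Set.univ (fun x => F x - ((η / p) / 2) * ‖x‖ ^ 2) ∧
      (∀ x, HasGradientAt F (g x) x) ∧
      (∀ x ∈ E, F x = f x ∧ g x = G x) ∧
      (∀ a b, ‖g a - g b‖ ≤ (q * M + η / p) * ‖a - b‖) ∧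
      q * M + η / p ≤ (q + 1) * M :=
  strongly_convex_jet_extension_general E f G M η p q hη hηM hp hq hpq hsep hrel
end

section
/- There exist E = {0,1} ⊂ ℝ, η ∈ (0, 1/4), f(0)=0, f(1)=η/2, and affine functions γ₀(x)=0, γ₁(x)=η/2 + 2η(x−1), such that γ₀ ∈ Γ^E_η(0; f), γ₁ ∈ Γ^E_η(1; f), and γ₀ ∼_1 γ₁, yet there exists no η-strongly convex function F ∈ C¹(ℝ) with J₀F = γ₀ and J₁F = γ₁. -/
/-!
Subtracting the quadratic turns the η-strongly convex `F` into a convex `G = F - (η/2)x²` with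
`G 0 = G 1 = 0`, `G' 0 = 0` and `G' 1 = η`. The tangent at `0` gives `G ≥ 0` on `[0, 1]` and
convexity gives `G ≤ 0` there, so `G` vanishes on `[0, 1]` and its derivative at `1`, computed from
the left, is `0 ≠ η`. The kinked `max 0 (η (x - 1))` has all the required values and right
derivatives, so it is the differentiability at `1` that cannot be achieved.
-/

open Set

theorem ConvexOn.eqOn_Icc_of_hasDerivAt_zero {S : Set ℝ} {G : ℝ → ℝ} {a b : ℝ}
    (hG : ConvexOn ℝ S G) (ha : a ∈ S) (hb : b ∈ S) (hab : G a = G b) (hG' : HasDerivAt G 0 a) :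
    EqOn G (fun _ => G a) (Icc a b) := by
  intro t ht
  refine le_antisymm ?_ ?_
  · simpa [← hab] using hG.le_max_of_mem_Icc ha hb ht
  · rcases ht.1.eq_or_lt with rfl | hat
    · rfl
    have htS : t ∈ S := hG.1.ordConnected.out ha hb ht
    have hslope : 0 ≤ slope G a t := hG.le_slope_of_hasDerivAt ha htS hat hG'
    rw [slope_def_field, le_div_iff₀ (sub_pos.2 hat), zero_mul, sub_nonneg] at hslope
    exact hslope

theorem HasDerivAt.eq_zero_of_eqOn_Icc_const {f : ℝ → ℝ} {f' a b c : ℝ} (hab : a < b)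
    (hf : EqOn f (fun _ => c) (Icc a b)) (hd : HasDerivAt f f' b) : f' = 0 := by
  have hb : b ∈ Icc a b := right_mem_Icc.2 hab.le
  have hconst : HasDerivWithinAt f 0 (Icc a b) b :=
    (hasDerivWithinAt_const b _ c).congr hf (hf hb)
  exact (uniqueDiffOn_Icc hab b hb).eq_deriv _ hd.hasDerivWithinAt hconst

theorem not_exists_stronglyConvex_of_jets {η : ℝ} (hη : η ≠ 0) :
    ¬ ∃ (F g : ℝ → ℝ),
        ConvexOn ℝ univ (fun x => F x - (η / 2) * x ^ 2) ∧
        (∀ x, HasDerivAt F (g x) x) ∧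
        F 0 = 0 ∧ g 0 = 0 ∧ F 1 = η / 2 ∧ g 1 = 2 * η := by
  rintro ⟨F, g, hconv, hF, hF0, hg0, hF1, hg1⟩
  have hG : ∀ x, HasDerivAt (fun x => F x - (η / 2) * x ^ 2) (g x - η * x) x := fun x =>
    ((hF x).sub ((hasDerivAt_pow 2 x).const_mul (η / 2))).congr_deriv (by norm_num; ring)
  have hG0 : HasDerivAt (fun x => F x - (η / 2) * x ^ 2) 0 0 :=
    (hG 0).congr_deriv (by simp [hg0])
  have hG1 : HasDerivAt (fun x => F x - (η / 2) * x ^ 2) η 1 :=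
    (hG 1).congr_deriv (by rw [hg1]; ring)
  have hG_eq_zero : EqOn (fun x => F x - (η / 2) * x ^ 2) (fun _ => 0) (Icc 0 1) := by
    simpa [hF0] using hconv.eqOn_Icc_of_hasDerivAt_zero (mem_univ 0) (mem_univ 1)
      (by simp [hF0, hF1]) hG0
  exact hη (hG1.eq_zero_of_eqOn_Icc_const one_pos hG_eq_zero)

/-- The counterexample of Section 2.2: there exist `η ∈ (0, 1/4)`, `E = {0,1}`,
`f(0)=0`, `f(1)=η/2`, and affine jets `γ₀(x) = 0`, `γ₁(x) = η/2 + 2η(x-1)` satisfying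
`γ₀ ∈ Γ^E_η(0;f)`, `γ₁ ∈ Γ^E_η(1;f)` and `γ₀ ∼_1 γ₁`, yet no `η`-strongly convex
differentiable function `F : ℝ → ℝ` has jets `J₀F = γ₀` and `J₁F = γ₁`. -/
theorem no_strongly_convex_extension_of_jets :
    ∃ η : ℝ, 0 < η ∧ η < 1 / 4 ∧
    (let γ₀ : ℝ → ℝ := fun _ => 0
     let γ₁ : ℝ → ℝ := fun x => η / 2 + 2 * η * (x - 1)
     -- γ₀ ∈ Γ^E_η(0; f): γ₀(0) = f(0) = 0 and γ₀(1) + (η/2)|1-0|² ≤ f(1) = η/2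
     (γ₀ 0 = 0 ∧ γ₀ 1 + (η / 2) * |(1 : ℝ) - 0| ^ 2 ≤ η / 2) ∧
     -- γ₁ ∈ Γ^E_η(1; f): γ₁(1) = f(1) = η/2 and γ₁(0) + (η/2)|0-1|² ≤ f(0) = 0
     (γ₁ 1 = η / 2 ∧ γ₁ 0 + (η / 2) * |(0 : ℝ) - 1| ^ 2 ≤ 0) ∧
     -- γ₀ ∼₁ γ₁
     (γ₀ 0 - γ₁ 0 ≥ (1 / 2) * |(0 : ℝ) - 2 * η| ^ 2 ∧
      γ₁ 1 - γ₀ 1 ≥ (1 / 2) * |(0 : ℝ) - 2 * η| ^ 2) ∧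
     -- no η-strongly convex differentiable F with J₀F = γ₀ and J₁F = γ₁
     ¬ ∃ (F g : ℝ → ℝ),
        ConvexOn ℝ Set.univ (fun x => F x - (η / 2) * x ^ 2) ∧
        (∀ x, HasDerivAt F (g x) x) ∧
        F 0 = 0 ∧ g 0 = 0 ∧ F 1 = η / 2 ∧ g 1 = 2 * η) :=
  ⟨1 / 8, by norm_num, by norm_num, ⟨rfl, by norm_num⟩, ⟨by norm_num, by norm_num⟩,
    ⟨by norm_num [abs_of_nonpos], by norm_num [abs_of_nonpos]⟩,
    not_exists_stronglyConvex_of_jets (by norm_num)⟩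
end

section
/- Let E = {−2,−1,0,1,2} and f(x) = |x| on E. Any convex function F : ℝ → ℝ with F|_E = f satisfies F(x) = |x| for all x ∈ [−2,2]; in particular, no convex differentiable F : ℝ → ℝ extends f. -/
open Set Filter Topology

section ThreeZeros

variable {𝕜 β : Type*} [Field 𝕜] [LinearOrder 𝕜] [IsStrictOrderedRing 𝕜]
  [AddCommGroup β] [LinearOrder β] [IsOrderedAddMonoid β] [Module 𝕜 β] [PosSMulStrictMono 𝕜 β]
  {f g : 𝕜 → β} {a b c : 𝕜}

/-- The chord from `a` to `c` bounds `f` from above; the chords through `b` extended beyond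
`[a, b]` and `[b, c]` bound it from below. -/
theorem ConvexOn.eqOn_zero_of_eq_zero_of_lt_of_lt (hf : ConvexOn 𝕜 (Icc a c) f)
    (hab : a < b) (hbc : b < c) (ha : f a = 0) (hb : f b = 0) (hc : f c = 0) :
    EqOn f 0 (Icc a c) := by
  intro x hx
  have ha' : a ∈ Icc a c := left_mem_Icc.2 (hab.trans hbc).le
  have hc' : c ∈ Icc a c := right_mem_Icc.2 (hab.trans hbc).le
  have upper : f x ≤ 0 := by
    simpa [ha, hc] using hf.le_on_segment ha' hc' ((segment_eq_Icc (hx.1.trans hx.2)).symm ▸ hx)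
  have lower : 0 ≤ f x := by
    rcases le_total x b with hxb | hbx
    · simpa [hb, hc] using hf.le_left_of_right_le'' hx hc' hxb hbc (by rw [hb, hc])
    · simpa [ha, hb] using hf.le_right_of_left_le'' ha' hx hab hbx (by rw [ha, hb])
  exact le_antisymm upper lower

theorem ConvexOn.eqOn_of_concaveOn_of_lt_of_lt (hf : ConvexOn 𝕜 (Icc a c) f)
    (hg : ConcaveOn 𝕜 (Icc a c) g) (hab : a < b) (hbc : b < c)
    (ha : f a = g a) (hb : f b = g b) (hc : f c = g c) : EqOn f g (Icc a c) := fun _ hx =>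
  sub_eq_zero.1 <| (hf.sub hg).eqOn_zero_of_eq_zero_of_lt_of_lt hab hbc
    (sub_eq_zero.2 ha) (sub_eq_zero.2 hb) (sub_eq_zero.2 hc) hx

end ThreeZeros

theorem eqOn_abs_of_convexOn_of_eqOn {F : ℝ → ℝ} (hF : ConvexOn ℝ univ F)
    (hE : ∀ x ∈ ({-2, -1, 0, 1, 2} : Set ℝ), F x = |x|) : EqOn F abs (Icc (-2) 2) := by
  have nonneg : EqOn F id (Icc 0 2) :=
    (hF.subset (subset_univ _) (convex_Icc 0 2)).eqOn_of_concaveOn_of_lt_of_lt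
      (concaveOn_id (convex_Icc 0 2)) zero_lt_one one_lt_two
      (by norm_num [hE]) (by norm_num [hE]) (by norm_num [hE])
  have nonpos : EqOn F Neg.neg (Icc (-2) 0) :=
    (hF.subset (subset_univ _) (convex_Icc (-2) 0)).eqOn_of_concaveOn_of_lt_of_lt
      (convexOn_id (convex_Icc (-2) 0)).neg (by norm_num : (-2 : ℝ) < -1) neg_one_lt_zero
      (by norm_num [hE]) (by norm_num [hE]) (by norm_num [hE])
  intro x hx
  rcases le_total 0 x with h | h
  · rw [nonneg ⟨h, hx.2⟩, abs_of_nonneg h, id]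
  · rw [nonpos ⟨hx.1, h⟩, abs_of_nonpos h]

/-- Sharpness example: any convex extension of `f(x) = |x|` from `E = {-2,-1,0,1,2}`
equals `|x|` on `[-2,2]`; in particular no convex differentiable extension exists. -/
theorem convex_extension_of_abs_is_abs :
    (∀ F : ℝ → ℝ, ConvexOn ℝ Set.univ F →
      (∀ x ∈ ({-2, -1, 0, 1, 2} : Set ℝ), F x = |x|) →
      ∀ x ∈ Set.Icc (-2 : ℝ) 2, F x = |x|) ∧
    ¬ ∃ F : ℝ → ℝ, ConvexOn ℝ Set.univ F ∧ Differentiable ℝ F ∧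
      ∀ x ∈ ({-2, -1, 0, 1, 2} : Set ℝ), F x = |x| := by
  refine ⟨fun F hF hE => eqOn_abs_of_convexOn_of_eqOn hF hE, ?_⟩
  rintro ⟨F, hF, hdiff, hE⟩
  have hF_abs : F =ᶠ[𝓝 0] abs :=
    eventuallyEq_of_mem (Icc_mem_nhds (by norm_num) (by norm_num))
      (eqOn_abs_of_convexOn_of_eqOn hF hE)
  exact not_differentiableAt_abs_zero (hF_abs.differentiableAt_iff.1 (hdiff 0))
end

section
/- Let x < y < z in ℝ, and let γ_x, γ_y, γ_z be affine with γ_x ∼_M γ_y and γ_y ∼_M γ_z. Then (γ_z' − γ_x')²/(2M) ≤ γ_x(x) − γ_z(x) follows from the identity γ_x(x) − γ_z(x) = (γ_y(y) − γ_z(y)) + (γ_x(x) − γ_y(x)) + (γ_z' − γ_y')(x − y) together with the bound γ_y' − γ_x' ≤ M(y − x), because x − y + (γ_y' − γ_x')/M ≤ 0 and γ_z' − γ_y' ≥ 0. -/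
/-!
Adding the two `∼_M` inequalities between `γ_x` and `γ_y` gives
`(γ_y' − γ_x')² / M ≤ (γ_y' − γ_x') (y − x)`, hence `γ_y' − γ_x' ≤ M (y − x)`. Expanding
`(γ_z' − γ_x')² = ((γ_z' − γ_y') + (γ_y' − γ_x'))²`, this bound absorbs the cross term into
`(γ_z' − γ_y') (y − x)`, which is exactly the defect in
`γ_x(x) − γ_z(x) = (γ_y(y) − γ_z(y)) + (γ_x(x) − γ_y(x)) + (γ_z' − γ_y') (y − x)`.
-/

lemma le_mul_of_sq_le_mul {M d h : ℝ} (hM : 0 < M) (hh : 0 ≤ h) (hd : d ^ 2 ≤ M * (d * h)) :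
    d ≤ M * h := by
  rcases le_or_gt d 0 with hd0 | hd0
  · nlinarith [mul_nonneg hM.le hh]
  · refine le_of_mul_le_mul_left ?_ hd0
    nlinarith

lemma slope_sub_le_of_sim {M x y px py sx sy : ℝ} (hM : 0 < M) (hxy : x ≤ y)
    (hxy1 : px - (py + sy * (x - y)) ≥ (1 / (2 * M)) * (sx - sy) ^ 2)
    (hxy2 : py - (px + sx * (y - x)) ≥ (1 / (2 * M)) * (sx - sy) ^ 2) :
    sy - sx ≤ M * (y - x) := by
  refine le_mul_of_sq_le_mul hM (sub_nonneg.2 hxy) ?_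
  have hsum : (sx - sy) ^ 2 / M ≤ (sy - sx) * (y - x) := by
    have : (sx - sy) ^ 2 / M = 2 * ((1 / (2 * M)) * (sx - sy) ^ 2) := by field_simp
    linarith
  rw [div_le_iff₀ hM] at hsum
  nlinarith

lemma sq_add_div_le {M a b h : ℝ} (hM : 0 < M) (ha : 0 ≤ a) (hb : b ≤ M * h) :
    (a + b) ^ 2 / (2 * M) ≤ a ^ 2 / (2 * M) + b ^ 2 / (2 * M) + a * h := by
  have hcross : a * b / M ≤ a * h := by
    rw [div_le_iff₀ hM]
    nlinarith
  have hexpand : (a + b) ^ 2 / (2 * M) = a ^ 2 / (2 * M) + b ^ 2 / (2 * M) + a * b / M := by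
    field_simp
    ring
  linarith

/-- `γ_a` is encoded as `t ↦ pa + sa * (t - a)`. -/
theorem transitivity_key_computation_general (M : ℝ) (hM : 0 < M)
    (x y z : ℝ) (hxy : x < y)
    (px py pz sx sy sz : ℝ)
    (hslopes : sx ≤ sy ∧ sy ≤ sz)
    (hxy1 : px - (py + sy * (x - y)) ≥ (1 / (2 * M)) * (sx - sy) ^ 2)
    (hxy2 : py - (px + sx * (y - x)) ≥ (1 / (2 * M)) * (sx - sy) ^ 2)
    (hyz1 : py - (pz + sz * (y - z)) ≥ (1 / (2 * M)) * (sy - sz) ^ 2) :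
    (sz - sx) ^ 2 / (2 * M) ≤ px - (pz + sz * (x - z)) := by
  have hslope := slope_sub_le_of_sim hM hxy.le hxy1 hxy2
  rw [one_div_mul_eq_div] at hxy1 hyz1
  rw [sub_sq_comm] at hxy1 hyz1
  calc (sz - sx) ^ 2 / (2 * M) = ((sz - sy) + (sy - sx)) ^ 2 / (2 * M) := by ring
    _ ≤ (sz - sy) ^ 2 / (2 * M) + (sy - sx) ^ 2 / (2 * M) + (sz - sy) * (y - x) :=
      sq_add_div_le hM (sub_nonneg.2 hslopes.2) hslope
    _ ≤ (py - (pz + sz * (y - z))) + (px - (py + sy * (x - y))) + (sz - sy) * (y - x) := by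
      linarith
    _ = px - (pz + sz * (x - z)) := by ring

/-- The key computation (4.2) inside the one-dimensional transitivity lemma:
for ordered points and ordered slopes, `(γ_z' − γ_x')²/(2M) ≤ γ_x(x) − γ_z(x)`.
An affine function with base point `a` is `t ↦ p + s * (t - a)`. -/
theorem transitivity_key_computation (M : ℝ) (hM : 0 < M)
    (x y z : ℝ) (hxy : x < y) (hyz : y < z)
    (px py pz sx sy sz : ℝ)
    (hslopes : sx ≤ sy ∧ sy ≤ sz)
    (hxy1 : px - (py + sy * (x - y)) ≥ (1 / (2 * M)) * (sx - sy) ^ 2)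
    (hxy2 : py - (px + sx * (y - x)) ≥ (1 / (2 * M)) * (sx - sy) ^ 2)
    (hyz1 : py - (pz + sz * (y - z)) ≥ (1 / (2 * M)) * (sy - sz) ^ 2)
    (hyz2 : pz - (py + sy * (z - y)) ≥ (1 / (2 * M)) * (sy - sz) ^ 2) :
    (sz - sx) ^ 2 / (2 * M) ≤ px - (pz + sz * (x - z)) :=
  transitivity_key_computation_general M hM x y z hxy px py pz sx sy sz hslopes hxy1 hxy2 hyz1
end
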